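/- arXiv:2404.09803 — 6 statements merged into one kernel-verified Lean document; each statement's English description precedes it below -/
import Mathlib

section
/- Let d ≥ 1 and let (g_n) be a sequence in GL(d,ℝ). Then there exist a strictly increasing map φ : ℕ → ℕ, an integer m ≥ 1, linear subspaces ℝ^d = W_0 ⊋ W_1 ⊋ ⋯ ⊋ W_m = {0}, and linear maps h_0, …, h_{m−1} : ℝ^d → ℝ^d such that for each j < m one has W_{j+1} = W_j ∩ ker(h_j), and for every vector v ∈ W_j ∖ W_{j+1} the sequence of points [g_{φ(k)} v] converges in ℙ^{d−1}(ℝ) to [h_j v] as k → ∞ (note h_j v ≠ 0 since v ∉ ker h_j). -/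
open Filter Matrix Topology

/-- Real projective space `ℙ^{d-1}(ℝ)`, as the projectivization of `ℝ^d`, carries the
quotient topology coming from `ℝ^d ∖ {0}`. -/
noncomputable instance projectivizationTopology (d : ℕ) :
    TopologicalSpace (Projectivization ℝ (Fin d → ℝ)) :=
  instTopologicalSpaceQuotient

/-!
Normalize the restrictions of `g_n` to a subspace `W` to operator norm one. By compactness of
the unit sphere in `Hom(W, ℝ^d)` a subsequence converges to some `T ≠ 0`, so `[g_n v] → [T v]`
for `v ∈ W ∖ ker T`. Then recurse on `W ∩ ker T`, which is strictly smaller, along the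
subsequence.
-/

open Function LinearMap

section

variable {E F : Type*} [NormedAddCommGroup E] [NormedSpace ℝ E] [FiniteDimensional ℝ E]
  [NormedAddCommGroup F] [NormedSpace ℝ F] [FiniteDimensional ℝ F]

theorem ContinuousLinearMap.exists_subseq_tendsto_smul (A : ℕ → E →L[ℝ] F) (hA : ∀ n, A n ≠ 0) :
    ∃ φ : ℕ → ℕ, StrictMono φ ∧ ∃ (c : ℕ → ℝ) (T : E →L[ℝ] F), (∀ k, c k ≠ 0) ∧ T ≠ 0 ∧
      Tendsto (fun k => c k • A (φ k)) atTop (𝓝 T) := by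
  have hsphere : ∀ n, ‖A n‖⁻¹ • A n ∈ Metric.sphere (0 : E →L[ℝ] F) 1 := fun n =>
    mem_sphere_zero_iff_norm.2 (norm_smul_inv_norm (hA n))
  obtain ⟨T, hT, φ, hφ, hlim⟩ := (isCompact_sphere _ _).tendsto_subseq hsphere
  exact ⟨φ, hφ, fun k => ‖A (φ k)‖⁻¹, T, fun k => inv_ne_zero (norm_ne_zero_iff.2 (hA _)),
    ne_zero_of_mem_unit_sphere ⟨T, hT⟩, hlim⟩

theorem Submodule.exists_subseq_tendsto_smul_apply {W : Submodule ℝ E} (hW : W ≠ ⊥)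
    (A : ℕ → E →L[ℝ] F) (hA : ∀ n, Injective (A n)) :
    ∃ φ : ℕ → ℕ, StrictMono φ ∧ ∃ (c : ℕ → ℝ) (h : E →ₗ[ℝ] F), (∀ k, c k ≠ 0) ∧
      W ⊓ ker h < W ∧ ∀ v ∈ W, Tendsto (fun k => c k • A (φ k) v) atTop (𝓝 (h v)) := by
  have hAW : ∀ n, (A n).comp W.subtypeL ≠ 0 := by
    intro n hn
    obtain ⟨w, hw, hw0⟩ := W.exists_mem_ne_zero_of_ne_bot hW
    exact hw0 (hA n (by simpa using congr($hn ⟨w, hw⟩)))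
  obtain ⟨φ, hφ, c, T, hc, hT, hlim⟩ := ContinuousLinearMap.exists_subseq_tendsto_smul _ hAW
  obtain ⟨h, hhT⟩ := LinearMap.exists_extend (T : W →ₗ[ℝ] F)
  have hhW : ∀ w : W, h w = T w := fun w => congr($hhT w)
  refine ⟨φ, hφ, c, h, hc, inf_le_left.lt_of_ne fun hker => hT ?_, fun v hv => ?_⟩
  · ext ⟨w, hw⟩
    simpa [hhW ⟨w, hw⟩] using (hker.ge hw).2
  · rw [hhW ⟨v, hv⟩]
    exact ((ContinuousLinearMap.apply ℝ F ⟨v, hv⟩).continuous.tendsto T).comp hlim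

theorem exists_filtration_tendsto_smul (A : ℕ → E →L[ℝ] F) (hA : ∀ n, Injective (A n))
    (W : Submodule ℝ E) :
    ∃ φ : ℕ → ℕ, StrictMono φ ∧ ∃ (m : ℕ) (V : ℕ → Submodule ℝ E) (h : ℕ → E →ₗ[ℝ] F),
      V 0 = W ∧ V m = ⊥ ∧ (∀ j < m, V (j + 1) < V j) ∧
      (∀ j < m, V (j + 1) = V j ⊓ ker (h j)) ∧
      ∀ j < m, ∃ c : ℕ → ℝ, (∀ k, c k ≠ 0) ∧
        ∀ v ∈ V j, Tendsto (fun k => c k • A (φ k) v) atTop (𝓝 (h j v)) := by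
  induction W using WellFoundedLT.induction generalizing A with
  | _ W ih =>
  rcases eq_or_ne W ⊥ with rfl | hW
  · exact ⟨id, strictMono_id, 0, fun _ => ⊥, fun _ => 0, rfl, rfl, by simp, by simp, by simp⟩
  obtain ⟨φ, hφ, c, h₀, hc, hlt, hlim⟩ := W.exists_subseq_tendsto_smul_apply hW A hA
  obtain ⟨ψ, hψ, m, V, h, hV0, hVm, hVlt, hVker, hVlim⟩ :=
    ih _ hlt (fun n => A (φ n)) fun n => hA (φ n)
  refine ⟨φ ∘ ψ, hφ.comp hψ, m + 1, fun | 0 => W | j + 1 => V j, fun | 0 => h₀ | j + 1 => h j,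
    rfl, hVm, ?_, ?_, ?_⟩
  · rintro (_ | j) hj
    exacts [hV0.trans_lt hlt, hVlt j (by omega)]
  · rintro (_ | j) hj
    exacts [hV0, hVker j (by omega)]
  · rintro (_ | j) hj
    · exact ⟨c ∘ ψ, fun k => hc _, fun v hv => (hlim v hv).comp hψ.tendsto_atTop⟩
    · exact hVlim j (by omega)

end

theorem Projectivization.tendsto_mk_of_tendsto_smul {α : Type*} {l : Filter α} {d : ℕ}
    {u : α → Fin d → ℝ} {x : Fin d → ℝ} (hu : ∀ a, u a ≠ 0) (hx : x ≠ 0) {c : α → ℝ}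
    (hc : ∀ a, c a ≠ 0) (hlim : Tendsto (fun a => c a • u a) l (𝓝 x)) :
    Tendsto (fun a => mk ℝ (u a) (hu a)) l (𝓝 (mk ℝ x hx)) := by
  have hcu : ∀ a, c a • u a ≠ 0 := fun a => smul_ne_zero (hc a) (hu a)
  have hmk : (fun a => mk ℝ (u a) (hu a)) = fun a => mk ℝ (c a • u a) (hcu a) :=
    funext fun a => (mk_eq_mk_iff' ℝ _ _ _ _).2 ⟨(c a)⁻¹, inv_smul_smul₀ (hc a) _⟩
  rw [hmk]
  exact (continuous_quotient_mk'.tendsto (⟨x, hx⟩ : {v : Fin d → ℝ // v ≠ 0})).comp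
    (tendsto_subtype_rng.2 hlim)

/-- Given a sequence `(g_n)` in `GL(d,ℝ)`, there is a subsequence `g_{φ(k)}`, a filtration
`ℝ^d = W_0 ⊋ W_1 ⊋ ⋯ ⊋ W_m = {0}` and linear maps `h_0, …, h_{m-1}` such that
`W_{j+1} = W_j ∩ ker h_j` and for every `v ∈ W_j ∖ W_{j+1}` the points `[g_{φ(k)} v]`
converge to `[h_j v]` in projective space. -/
theorem furstenberg_filtration (d : ℕ) (hd : 1 ≤ d)
    (g : ℕ → Matrix.GeneralLinearGroup (Fin d) ℝ) :
    ∃ φ : ℕ → ℕ, StrictMono φ ∧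
    ∃ m : ℕ, 1 ≤ m ∧
    ∃ (W : ℕ → Submodule ℝ (Fin d → ℝ)) (h : ℕ → ((Fin d → ℝ) →ₗ[ℝ] (Fin d → ℝ))),
      W 0 = ⊤ ∧ W m = ⊥ ∧
      (∀ j, j < m → W (j + 1) < W j) ∧
      (∀ j, j < m → W (j + 1) = W j ⊓ LinearMap.ker (h j)) ∧
      (∀ j, j < m → ∀ v ∈ W j, v ∉ W (j + 1) →
        ∃ (hgv : ∀ k : ℕ, ((g (φ k) : Matrix (Fin d) (Fin d) ℝ)) *ᵥ v ≠ 0)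
          (hhv : h j v ≠ 0),
          Tendsto
            (fun k : ℕ =>
              Projectivization.mk ℝ (((g (φ k) : Matrix (Fin d) (Fin d) ℝ)) *ᵥ v) (hgv k))
            atTop (𝓝 (Projectivization.mk ℝ (h j v) hhv))) := by
  have : NeZero d := ⟨by omega⟩
  have hg : ∀ n, Injective (g n : Matrix (Fin d) (Fin d) ℝ).mulVec := fun n =>
    mulVec_injective_of_isUnit (g n).isUnit
  let A : ℕ → (Fin d → ℝ) →L[ℝ] (Fin d → ℝ) := fun n =>
    toContinuousLinearMap (g n : Matrix (Fin d) (Fin d) ℝ).mulVecLin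
  obtain ⟨φ, hφ, m, W, h, hW0, hWm, hWlt, hWker, hWlim⟩ := exists_filtration_tendsto_smul A hg ⊤
  have hm : m ≠ 0 := by
    rintro rfl
    exact top_ne_bot (hW0.symm.trans hWm)
  refine ⟨φ, hφ, m, Nat.one_le_iff_ne_zero.2 hm, W, h, hW0, hWm, hWlt, hWker,
    fun j hj v hv hv' => ?_⟩
  obtain ⟨c, hc, hlim⟩ := hWlim j hj
  have hv0 : v ≠ 0 := fun h0 => hv' (h0 ▸ (W (j + 1)).zero_mem)
  have hgv : ∀ k, (g (φ k) : Matrix (Fin d) (Fin d) ℝ) *ᵥ v ≠ 0 := fun k =>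
    (hg (φ k)).ne_iff' (mulVec_zero _) |>.2 hv0
  have hhv : h j v ≠ 0 := fun h0 => hv' (hWker j hj ▸ ⟨hv, h0⟩)
  exact ⟨hgv, hhv, Projectivization.tendsto_mk_of_tendsto_smul hgv hhv hc (hlim v hv)⟩
end

section
/- Let d ≥ 1 and let (g_n) be a sequence in GL(d,ℝ). Then there exist a strictly increasing map φ : ℕ → ℕ and a function p : ℙ^{d−1}(ℝ) → ℙ^{d−1}(ℝ) such that for every nonzero v ∈ ℝ^d the sequence [g_{φ(k)} v] converges to p([v]) in ℙ^{d−1}(ℝ) as k → ∞. (This expresses that the action of GL(d,ℝ) on ℙ^{d−1}(ℝ) is tame: every sequence of induced projective maps has a pointwise convergent subsequence.) -/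
open Filter Matrix Topology

/-!
Rescale the maps `g_k` to operator norm one and extract a subsequence converging to some
`B ≠ 0`. Then `[g_k v] → [B v]` for every `v ∉ ker B`, while the restrictions of the `g_k` to
`ker B`, still injective and on a space of smaller dimension, are handled by induction.
-/

open Function Module

def ConvergesUpToScale {E : Type*} [AddCommGroup E] [Module ℝ E] [TopologicalSpace E]
    (w : ℕ → E) : Prop :=
  ∃ c : ℕ → ℝ, (∀ k, c k ≠ 0) ∧ ∃ l ≠ 0, Tendsto (fun k => c k • w k) atTop (𝓝 l)

lemma exists_subseq_tendsto_inv_norm_smul {X : Type*} [NormedAddCommGroup X] [NormedSpace ℝ X]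
    [ProperSpace X] (x : ℕ → X) (hx : ∀ k, x k ≠ 0) :
    ∃ φ : ℕ → ℕ, StrictMono φ ∧ ∃ y ≠ 0, Tendsto (fun k => ‖x (φ k)‖⁻¹ • x (φ k)) atTop (𝓝 y) := by
  have hsphere : ∀ k, ‖x k‖⁻¹ • x k ∈ Metric.sphere (0 : X) 1 := fun k => by
    simpa using norm_smul_inv_norm (𝕜 := ℝ) (hx k)
  obtain ⟨y, hy, φ, hφ, hlim⟩ := (isCompact_sphere (0 : X) 1).tendsto_subseq hsphere
  exact ⟨φ, hφ, y, ne_zero_of_mem_unit_sphere ⟨y, hy⟩, hlim⟩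

theorem exists_subseq_convergesUpToScale {V E : Type*} [NormedAddCommGroup V] [NormedSpace ℝ V]
    [FiniteDimensional ℝ V] [NormedAddCommGroup E] [NormedSpace ℝ E] [FiniteDimensional ℝ E]
    (A : ℕ → V →L[ℝ] E) (hA : ∀ k, Injective (A k)) :
    ∃ φ : ℕ → ℕ, StrictMono φ ∧ ∀ v ≠ 0, ConvergesUpToScale fun k => A (φ k) v := by
  induction h : finrank ℝ V using Nat.strong_induction_on generalizing V with
  | _ n ih =>
  rcases subsingleton_or_nontrivial V with hV | hV
  · exact ⟨id, strictMono_id, fun v hv => absurd (Subsingleton.elim v 0) hv⟩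
  have hA0 : ∀ k, A k ≠ 0 := fun k hk => by
    obtain ⟨v, hv⟩ := exists_ne (0 : V)
    exact hv (hA k (by simp [hk]))
  obtain ⟨φ, hφ, B, hB, hAB⟩ := exists_subseq_tendsto_inv_norm_smul A hA0
  set K := LinearMap.ker (B : V →ₗ[ℝ] E)
  have hK : finrank ℝ K < n := h ▸ Submodule.finrank_lt fun hK =>
    hB (ContinuousLinearMap.coe_injective (LinearMap.ker_eq_top.1 hK))
  obtain ⟨ψ, hψ, hKconv⟩ := ih _ hK (fun k => (A (φ k)).comp K.subtypeL)
    (fun k => (hA _).comp Subtype.val_injective) rfl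
  refine ⟨φ ∘ ψ, hφ.comp hψ, fun v hv => ?_⟩
  by_cases hvK : B v = 0
  · exact hKconv ⟨v, LinearMap.mem_ker.2 hvK⟩ (by simpa using hv)
  · refine ⟨fun k => ‖A (φ (ψ k))‖⁻¹, fun k => inv_ne_zero (norm_ne_zero_iff.2 (hA0 _)),
      B v, hvK, ?_⟩
    exact ((continuous_eval_const v).tendsto B).comp (hAB.comp hψ.tendsto_atTop)

lemma ConvergesUpToScale.exists_tendsto_mk {d : ℕ} {w : ℕ → Fin d → ℝ} (hw : ∀ k, w k ≠ 0)
    (h : ConvergesUpToScale w) :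
    ∃ x, Tendsto (fun k => Projectivization.mk ℝ (w k) (hw k)) atTop (𝓝 x) := by
  obtain ⟨c, hc, l, hl, hcl⟩ := h
  have hsub : Tendsto
      (fun k => (⟨c k • w k, smul_ne_zero (hc k) (hw k)⟩ : {v : Fin d → ℝ // v ≠ 0}))
      atTop (𝓝 ⟨l, hl⟩) := tendsto_subtype_rng.2 hcl
  refine ⟨Projectivization.mk ℝ l hl,
    ((continuous_quotient_mk'.tendsto _).comp hsub).congr fun k => ?_⟩
  exact (Projectivization.mk_eq_mk_iff' ℝ _ _ _ _).2 ⟨c k, rfl⟩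

theorem tame_projective_action_general (d : ℕ)
    (g : ℕ → Matrix.GeneralLinearGroup (Fin d) ℝ) :
    ∃ φ : ℕ → ℕ, StrictMono φ ∧
      ∃ p : Projectivization ℝ (Fin d → ℝ) → Projectivization ℝ (Fin d → ℝ),
        ∀ (v : Fin d → ℝ) (hv : v ≠ 0),
          ∃ hgv : ∀ k : ℕ, ((g (φ k) : Matrix (Fin d) (Fin d) ℝ)) *ᵥ v ≠ 0,
            Tendsto
              (fun k : ℕ =>
                Projectivization.mk ℝ (((g (φ k) : Matrix (Fin d) (Fin d) ℝ)) *ᵥ v) (hgv k))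
              atTop (𝓝 (p (Projectivization.mk ℝ v hv))) := by
  let A : ℕ → (Fin d → ℝ) →L[ℝ] (Fin d → ℝ) :=
    fun k => LinearMap.toContinuousLinearMap (g k : Matrix (Fin d) (Fin d) ℝ).mulVecLin
  have hA : ∀ k, Injective (A k) := fun k => mulVec_injective_of_isUnit (g k).isUnit
  obtain ⟨φ, hφ, hconv⟩ := exists_subseq_convergesUpToScale A hA
  have hlim : ∀ x, ∃ y, Tendsto
      (fun k => Projectivization.map (A (φ k)).toLinearMap (hA (φ k)) x) atTop (𝓝 y) := by
    refine Projectivization.ind fun v hv => ?_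
    simpa only [Projectivization.map_mk, ContinuousLinearMap.coe_coe] using
      (hconv v hv).exists_tendsto_mk _
  choose p hp using hlim
  refine ⟨φ, hφ, p, fun v hv => ⟨fun k => (map_ne_zero_iff _ (hA (φ k))).2 hv, ?_⟩⟩
  have hpv := hp (Projectivization.mk ℝ v hv)
  simp only [Projectivization.map_mk, ContinuousLinearMap.coe_coe] at hpv
  exact hpv

/-- The action of `GL(d,ℝ)` on `ℙ^{d-1}(ℝ)` is tame: every sequence `(g_n)` in `GL(d,ℝ)`
admits a subsequence `g_{φ(k)}` whose induced projective maps converge pointwise to a map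
`p : ℙ^{d-1}(ℝ) → ℙ^{d-1}(ℝ)`. -/
theorem tame_projective_action (d : ℕ) (hd : 1 ≤ d)
    (g : ℕ → Matrix.GeneralLinearGroup (Fin d) ℝ) :
    ∃ φ : ℕ → ℕ, StrictMono φ ∧
      ∃ p : Projectivization ℝ (Fin d → ℝ) → Projectivization ℝ (Fin d → ℝ),
        ∀ (v : Fin d → ℝ) (hv : v ≠ 0),
          ∃ hgv : ∀ k : ℕ, ((g (φ k) : Matrix (Fin d) (Fin d) ℝ)) *ᵥ v ≠ 0,
            Tendsto
              (fun k : ℕ =>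
                Projectivization.mk ℝ (((g (φ k) : Matrix (Fin d) (Fin d) ℝ)) *ᵥ v) (hgv k))
              atTop (𝓝 (p (Projectivization.mk ℝ v hv))) :=
  tame_projective_action_general d g
end

section
/- Let d ≥ 2 and let (g_n) be a sequence in SL(d,ℝ) with ‖g_n‖ → ∞. Then there exist a strictly increasing map φ : ℕ → ℕ and linear subspaces W, L of ℝ^d with 1 ≤ dim W ≤ d−1 and dim W + dim L = d, such that for every vector v ∈ ℝ^d ∖ W there is a nonzero u ∈ L with [g_{φ(k)} v] → [u] in ℙ^{d−1}(ℝ) as k → ∞. In particular the pointwise limit of the induced projective maps sends ℙ^{d−1}(ℝ) ∖ ℙ(W) into the proper projective subspace ℙ(L). -/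
open Filter Matrix Topology

/-- If `(g_n)` is a sequence in `SL(d,ℝ)` (`d ≥ 2`) with operator norms tending to infinity,
then there are a subsequence `g_{φ(k)}` and subspaces `W, L ⊆ ℝ^d` with
`1 ≤ dim W ≤ d - 1` and `dim W + dim L = d` such that for every `v ∉ W` the points
`[g_{φ(k)} v]` converge to some `[u]` with `u ∈ L ∖ {0}`. -/
theorem sl_escape_to_subvariety (d : ℕ) (hd : 2 ≤ d)
    (g : ℕ → Matrix.SpecialLinearGroup (Fin d) ℝ)
    (hnorm : Tendsto
      (fun n : ℕ =>
        ‖LinearMap.toContinuousLinearMap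
          (Matrix.mulVecLin ((g n : Matrix (Fin d) (Fin d) ℝ)))‖)
      atTop atTop) :
    ∃ φ : ℕ → ℕ, StrictMono φ ∧
    ∃ W L : Submodule ℝ (Fin d → ℝ),
      1 ≤ Module.finrank ℝ W ∧ Module.finrank ℝ W ≤ d - 1 ∧
      Module.finrank ℝ W + Module.finrank ℝ L = d ∧
      ∀ v : Fin d → ℝ, v ∉ W →
        ∃ u ∈ L, ∃ (hu : u ≠ 0)
          (hgv : ∀ k : ℕ, ((g (φ k) : Matrix (Fin d) (Fin d) ℝ)) *ᵥ v ≠ 0),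
          Tendsto
            (fun k : ℕ =>
              Projectivization.mk ℝ (((g (φ k) : Matrix (Fin d) (Fin d) ℝ)) *ᵥ v) (hgv k))
            atTop (𝓝 (Projectivization.mk ℝ u hu)) := by
  classical
  set T : ℕ → ((Fin d → ℝ) →L[ℝ] (Fin d → ℝ)) := fun n =>
    LinearMap.toContinuousLinearMap
      (Matrix.mulVecLin ((g n : Matrix (Fin d) (Fin d) ℝ))) with hTdef
  -- every g_n is injective on vectors
  have hgvgen : ∀ (n : ℕ) (w : Fin d → ℝ), w ≠ 0 →
      ((g n : Matrix (Fin d) (Fin d) ℝ)) *ᵥ w ≠ 0 := by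
    intro n w hw hz
    have hu : IsUnit ((g n : Matrix (Fin d) (Fin d) ℝ)).det := by
      rw [(g n).2]; exact isUnit_one
    have hinv : ((g n : Matrix (Fin d) (Fin d) ℝ))⁻¹ * (g n : Matrix (Fin d) (Fin d) ℝ) = 1 :=
      Matrix.nonsing_inv_mul _ hu
    apply hw
    calc w = (1 : Matrix (Fin d) (Fin d) ℝ) *ᵥ w := (Matrix.one_mulVec w).symm
      _ = (((g n : Matrix (Fin d) (Fin d) ℝ))⁻¹ * (g n : Matrix (Fin d) (Fin d) ℝ)) *ᵥ w := by
          rw [hinv]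
      _ = ((g n : Matrix (Fin d) (Fin d) ℝ))⁻¹ *ᵥ (((g n : Matrix (Fin d) (Fin d) ℝ)) *ᵥ w) :=
          (Matrix.mulVec_mulVec _ _ _).symm
      _ = 0 := by rw [hz, Matrix.mulVec_zero]
  have hdetT : ∀ n, LinearMap.det ((T n : (Fin d → ℝ) →ₗ[ℝ] (Fin d → ℝ))) = 1 := by
    intro n
    have h1 : ((T n : (Fin d → ℝ) →L[ℝ] (Fin d → ℝ)) : (Fin d → ℝ) →ₗ[ℝ] (Fin d → ℝ))
        = Matrix.toLin' ((g n : Matrix (Fin d) (Fin d) ℝ)) := rfl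
    rw [h1, LinearMap.det_toLin']
    exact (g n).2
  -- a tail where norms are at least 1
  obtain ⟨n0, hn0⟩ := Filter.eventually_atTop.mp (hnorm.eventually_ge_atTop 1)
  have hTpos : ∀ k : ℕ, 0 < ‖T (k + n0)‖ := fun k =>
    lt_of_lt_of_le one_pos (hn0 _ (Nat.le_add_left n0 k))
  set h : ℕ → ((Fin d → ℝ) →L[ℝ] (Fin d → ℝ)) := fun k =>
    (‖T (k + n0)‖)⁻¹ • T (k + n0) with hhdef
  have hsphere : ∀ k, h k ∈ Metric.sphere (0 : (Fin d → ℝ) →L[ℝ] (Fin d → ℝ)) 1 := by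
    intro k
    rw [mem_sphere_zero_iff_norm]
    exact (norm_smul ((‖T (k + n0)‖)⁻¹) (T (k + n0))).trans
      (by rw [norm_inv, norm_norm]; exact inv_mul_cancel₀ (hTpos k).ne')
  obtain ⟨hinf, hinfmem, ψ, hψ, hconv⟩ :=
    (isCompact_sphere (0 : (Fin d → ℝ) →L[ℝ] (Fin d → ℝ)) 1).tendsto_subseq hsphere
  have hinfnorm : ‖hinf‖ = 1 := mem_sphere_zero_iff_norm.mp hinfmem
  have hinfne : hinf ≠ 0 := by
    intro hc; rw [hc, norm_zero] at hinfnorm; exact one_ne_zero hinfnorm.symm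
  set φ : ℕ → ℕ := fun k => ψ k + n0 with hφdef
  have hφmono : StrictMono φ := fun a b hab => Nat.add_lt_add_right (hψ hab) n0
  -- determinant of the limit is zero
  have hdet0 : LinearMap.det ((hinf : (Fin d → ℝ) →ₗ[ℝ] (Fin d → ℝ))) = 0 := by
    have hc : Tendsto (fun k => ContinuousLinearMap.det (h (ψ k))) atTop
        (𝓝 (ContinuousLinearMap.det hinf)) :=
      (ContinuousLinearMap.continuous_det.tendsto hinf).comp hconv
    have hval : ∀ k, ContinuousLinearMap.det (h (ψ k)) = (‖T (ψ k + n0)‖)⁻¹ ^ d := by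
      intro k
      show LinearMap.det ((h (ψ k) : (Fin d → ℝ) →L[ℝ] (Fin d → ℝ))
        : (Fin d → ℝ) →ₗ[ℝ] (Fin d → ℝ)) = _
      rw [hhdef]
      have : (((‖T (ψ k + n0)‖)⁻¹ • T (ψ k + n0) : (Fin d → ℝ) →L[ℝ] (Fin d → ℝ))
          : (Fin d → ℝ) →ₗ[ℝ] (Fin d → ℝ))
          = (‖T (ψ k + n0)‖)⁻¹ • ((T (ψ k + n0) : (Fin d → ℝ) →L[ℝ] (Fin d → ℝ))
          : (Fin d → ℝ) →ₗ[ℝ] (Fin d → ℝ)) := rfl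
      rw [this, LinearMap.det_smul, hdetT, Module.finrank_fin_fun, mul_one]
    have hTtop : Tendsto (fun k => ‖T (ψ k + n0)‖) atTop atTop := by
      have : Tendsto (fun k => ψ k + n0) atTop atTop :=
        tendsto_atTop_mono (fun k => Nat.le_add_right (ψ k) n0) hψ.tendsto_atTop
      exact hnorm.comp this
    have h0 : Tendsto (fun k => (‖T (ψ k + n0)‖)⁻¹ ^ d) atTop (𝓝 0) := by
      have := hTtop.inv_tendsto_atTop
      have hp := this.pow d
      rwa [zero_pow (by omega : d ≠ 0)] at hp
    have := tendsto_nhds_unique hc (by simpa only [hval] using h0 :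
      Tendsto (fun k => ContinuousLinearMap.det (h (ψ k))) atTop (𝓝 0))
    exact this
  set f : (Fin d → ℝ) →ₗ[ℝ] (Fin d → ℝ) := (hinf : (Fin d → ℝ) →ₗ[ℝ] (Fin d → ℝ)) with hfdef
  have hfne : f ≠ 0 := by
    intro hc
    exact hinfne (ContinuousLinearMap.coe_injective
      (hc.trans (ContinuousLinearMap.coe_zero).symm))
  have hkerne : LinearMap.ker f ≠ ⊥ :=
    (bot_lt_iff_ne_bot.mp (LinearMap.bot_lt_ker_of_det_eq_zero hdet0))
  have hrangene : LinearMap.range f ≠ ⊥ := fun hc => hfne (LinearMap.range_eq_bot.mp hc)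
  have hsum : Module.finrank ℝ (LinearMap.range f) + Module.finrank ℝ (LinearMap.ker f)
      = d := by
    rw [LinearMap.finrank_range_add_finrank_ker f, Module.finrank_fin_fun]
  have hker1 : 1 ≤ Module.finrank ℝ (LinearMap.ker f) := by
    rw [Nat.one_le_iff_ne_zero]
    intro hc
    exact hkerne (Submodule.finrank_eq_zero.mp hc)
  have hrange1 : 1 ≤ Module.finrank ℝ (LinearMap.range f) := by
    rw [Nat.one_le_iff_ne_zero]
    intro hc
    exact hrangene (Submodule.finrank_eq_zero.mp hc)
  refine ⟨φ, hφmono, LinearMap.ker f, LinearMap.range f, hker1, by omega, by omega, ?_⟩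
  intro v hv
  have hv0 : v ≠ 0 := fun hc => hv (hc ▸ (LinearMap.ker f).zero_mem)
  have hfv : f v ≠ 0 := fun hc => hv (LinearMap.mem_ker.mpr hc)
  have hgv : ∀ k : ℕ, ((g (φ k) : Matrix (Fin d) (Fin d) ℝ)) *ᵥ v ≠ 0 := fun k =>
    hgvgen (φ k) v hv0
  refine ⟨f v, LinearMap.mem_range_self f v, hfv, hgv, ?_⟩
  -- pointwise convergence of the normalized sequence
  have hptconv : Tendsto (fun k => (h (ψ k)) v) atTop (𝓝 (hinf v)) :=
    ((ContinuousLinearMap.apply ℝ (Fin d → ℝ) v).continuous.tendsto hinf).comp hconv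
  have hhv : ∀ k, (h (ψ k)) v = (‖T (φ k)‖)⁻¹ • (((g (φ k) : Matrix (Fin d) (Fin d) ℝ)) *ᵥ v) := by
    intro k
    rfl
  have hhvne : ∀ k, (h (ψ k)) v ≠ 0 := by
    intro k
    rw [hhv k]
    exact smul_ne_zero (inv_ne_zero (hTpos (ψ k)).ne') (hgv k)
  have hinfv : hinf v = f v := rfl
  -- convergence in the subtype of nonzero vectors
  have hsub : Tendsto (fun k => (⟨(h (ψ k)) v, hhvne k⟩ : {x : Fin d → ℝ // x ≠ 0}))
      atTop (𝓝 (⟨f v, hfv⟩ : {x : Fin d → ℝ // x ≠ 0})) := by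
    rw [tendsto_subtype_rng]
    exact hptconv
  have hquot : Tendsto (fun k => Projectivization.mk ℝ ((h (ψ k)) v) (hhvne k))
      atTop (𝓝 (Projectivization.mk ℝ (f v) hfv)) :=
    (continuous_quotient_mk'.tendsto _).comp hsub
  have hmkeq : ∀ k, Projectivization.mk ℝ (((g (φ k) : Matrix (Fin d) (Fin d) ℝ)) *ᵥ v) (hgv k)
      = Projectivization.mk ℝ ((h (ψ k)) v) (hhvne k) := by
    intro k
    rw [Projectivization.mk_eq_mk_iff']
    refine ⟨‖T (φ k)‖, ?_⟩
    rw [hhv k, smul_smul, mul_inv_cancel₀ (hTpos (ψ k)).ne', one_smul]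
  simpa only [hmkeq] using hquot
end

section
/- Let Z be a compact metric space and let a group G act on Z with every element acting as a homeomorphism. Let (γ_n) be a sequence in G and let a, r, v ∈ Z be points such that: (i) for every compact set K ⊆ Z with r ∉ K, the maps z ↦ γ_n · z converge uniformly on K to the constant map with value a; and (ii) γ_n · r → v. Let g ∈ G satisfy g · a ≠ r and g · v ≠ r. Then for every z ∈ Z, (γ_n g γ_n g^{-1}) · z → a as n → ∞. -/
open Filter Topology

lemma rsp_aux {Z : Type*} [MetricSpace Z] [CompactSpace Z]
    {G : Type*} [Group G] [MulAction G Z]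
    (γ : ℕ → G) (a r : Z)
    (h1 : ∀ K : Set Z, IsCompact K → r ∉ K →
      TendstoUniformlyOn (fun (n : ℕ) (z : Z) => γ n • z) (fun _ => a) atTop K)
    {x : Z} (hx : x ≠ r) {f : ℕ → Z} (hf : Tendsto f atTop (𝓝 x)) :
    Tendsto (fun n : ℕ => γ n • f n) atTop (𝓝 a) := by
  have hd : 0 < dist x r := dist_pos.2 hx
  set K := Metric.closedBall x (dist x r / 2) with hK
  have hKc : IsCompact K := Metric.isClosed_closedBall.isCompact
  have hrK : r ∉ K := by
    simp only [hK, Metric.mem_closedBall]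
    rw [dist_comm]
    linarith
  have hU := (Metric.tendstoUniformlyOn_iff).1 (h1 K hKc hrK)
  have hev : ∀ᶠ n in atTop, f n ∈ K :=
    hf (Metric.closedBall_mem_nhds x (by linarith))
  rw [Metric.tendsto_nhds]
  intro ε hε
  filter_upwards [hU ε hε, hev] with n h1n h2n
  rw [dist_comm]
  exact h1n (f n) h2n

/-- Convergence-group computation: if `γ_n → a` uniformly on compact sets missing `r`,
`γ_n · r → v`, and `g · a ≠ r`, `g · v ≠ r`, then `(γ_n g γ_n g⁻¹) · z → a` for every `z`. -/
theorem rsp_sequence_convergence {Z : Type*} [MetricSpace Z] [CompactSpace Z]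
    {G : Type*} [Group G] [MulAction G Z]
    (hcont : ∀ g : G, Continuous fun z : Z => g • z)
    (γ : ℕ → G) (a r v : Z)
    (h1 : ∀ K : Set Z, IsCompact K → r ∉ K →
      TendstoUniformlyOn (fun (n : ℕ) (z : Z) => γ n • z) (fun _ => a) atTop K)
    (h2 : Tendsto (fun n : ℕ => γ n • r) atTop (𝓝 v))
    (g : G) (hga : g • a ≠ r) (hgv : g • v ≠ r) :
    ∀ z : Z, Tendsto (fun n : ℕ => (γ n * g * γ n * g⁻¹) • z) atTop (𝓝 a) := by
  intro z
  set w : Z := g⁻¹ • z with hw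
  have hkey : (fun n : ℕ => (γ n * g * γ n * g⁻¹) • z)
      = fun n : ℕ => γ n • (g • (γ n • w)) := by
    funext n
    simp [hw, mul_smul]
  rw [hkey]
  by_cases hwr : w = r
  · -- γ n • w → v, so g • (γ n • w) → g • v ≠ r
    have hconv : Tendsto (fun n : ℕ => g • (γ n • w)) atTop (𝓝 (g • v)) := by
      rw [hwr]
      exact ((hcont g).continuousAt.tendsto).comp h2
    exact rsp_aux γ a r h1 hgv hconv
  · -- γ n • w → a (uniform conv at {w}), so g • (γ n • w) → g • a ≠ r
    have hwa : Tendsto (fun n : ℕ => γ n • w) atTop (𝓝 a) :=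
      rsp_aux γ a r h1 hwr tendsto_const_nhds
    have hconv : Tendsto (fun n : ℕ => g • (γ n • w)) atTop (𝓝 (g • a)) :=
      ((hcont g).continuousAt.tendsto).comp hwa
    exact rsp_aux γ a r h1 hga hconv
end

section
/- Let X be a compact Hausdorff space with its Borel σ-algebra and let a group G act on X by homeomorphisms, acting on Prob(X) by pushforward. Assume that for every μ ∈ Prob(X) there exists x ∈ X such that δ_x lies in the closure of {g·μ : g ∈ G} in Prob(X). Then for all μ₁, μ₂ ∈ Prob(X) there exists x ∈ X such that the pair (δ_x, δ_x) lies in the closure of {(g·μ₁, g·μ₂) : g ∈ G} in Prob(X) × Prob(X); in particular the induced action of G on Prob(X) is proximal. -/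
open Filter Topology MeasureTheory
open scoped ENNReal BoundedContinuousFunction

/-!
Apply the hypothesis to the average `μ = (μ₁ + μ₂) / 2` to get `g • μ → δ_x` along a filter on
`G`. Since `μᵢ ≤ 2 • μ`, also `g • μᵢ ≤ 2 • (g • μ)`. Convergence to a Dirac mass `δ_x` means
`∫ |f - f x| → 0` for every bounded continuous `f`, and this passes from a measure to any
measure it dominates up to a constant. Hence `g • μ₁ → δ_x` and `g • μ₂ → δ_x` along the
same filter.
-/

theorem Filter.comap_nhds_neBot_of_mem_closure_range {ι Y : Type*} [TopologicalSpace Y]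
    {f : ι → Y} {a : Y} (h : a ∈ closure (Set.range f)) : (comap f (𝓝 a)).NeBot :=
  comap_neBot fun _ hs => by
    obtain ⟨_, hy, i, rfl⟩ := mem_closure_iff_nhds.1 h _ hs
    exact ⟨i, hy⟩

namespace MeasureTheory

theorem Measure.map_le_smul_map_of_le_smul {X Y : Type*} [MeasurableSpace X] [MeasurableSpace Y]
    {μ ν : Measure X} {c : ℝ≥0∞} (h : ν ≤ c • μ) {f : X → Y} (hf : Measurable f) :
    ν.map f ≤ c • μ.map f :=
  (Measure.map_smul c μ f) ▸ Measure.map_mono h hf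

namespace ProbabilityMeasure

variable {X : Type*} [MeasurableSpace X]

noncomputable def dirac (x : X) : ProbabilityMeasure X := ⟨Measure.dirac x, inferInstance⟩

noncomputable def average (μ₁ μ₂ : ProbabilityMeasure X) : ProbabilityMeasure X :=
  ⟨(2 : ℝ≥0∞)⁻¹ • ((μ₁ : Measure X) + μ₂), ⟨by simp [ENNReal.inv_two_add_inv_two]⟩⟩

theorem two_smul_average (μ₁ μ₂ : ProbabilityMeasure X) :
    (2 : ℝ≥0∞) • (average μ₁ μ₂ : Measure X) = μ₁ + μ₂ := by
  simp [average, smul_smul, ENNReal.mul_inv_cancel]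

theorem le_two_smul_average_left (μ₁ μ₂ : ProbabilityMeasure X) :
    (μ₁ : Measure X) ≤ (2 : ℝ≥0∞) • (average μ₁ μ₂ : Measure X) :=
  two_smul_average μ₁ μ₂ ▸ Measure.le_add_right le_rfl

theorem le_two_smul_average_right (μ₁ μ₂ : ProbabilityMeasure X) :
    (μ₂ : Measure X) ≤ (2 : ℝ≥0∞) • (average μ₁ μ₂ : Measure X) :=
  two_smul_average μ₁ μ₂ ▸ Measure.le_add_left le_rfl

variable [TopologicalSpace X] [OpensMeasurableSpace X] {ι : Type*} {l : Filter ι} {x : X}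

theorem tendsto_dirac_iff {μ : ι → ProbabilityMeasure X} :
    Tendsto μ l (𝓝 (dirac x)) ↔
      ∀ f : X →ᵇ ℝ, Tendsto (fun i => ∫ y, |f y - f x| ∂(μ i : Measure X)) l (𝓝 0) := by
  rw [tendsto_iff_forall_integral_tendsto]
  refine ⟨fun h f => ?_, fun h f => ?_⟩
  · set g : X →ᵇ ℝ := |f - BoundedContinuousFunction.const X (f x)|
    have hg := h g
    rw [dirac, coe_mk, integral_dirac' _ _ g.continuous.stronglyMeasurable] at hg
    simpa [g] using hg
  · have hle (i : ι) :
        ‖(∫ y, f y ∂(μ i : Measure X)) - f x‖ ≤ ∫ y, |f y - f x| ∂(μ i : Measure X) :=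
      calc ‖(∫ y, f y ∂(μ i : Measure X)) - f x‖ = ‖∫ y, (f y - f x) ∂(μ i : Measure X)‖ := by
            rw [integral_sub (f.integrable _) (integrable_const _)]; simp
        _ ≤ ∫ y, |f y - f x| ∂(μ i : Measure X) := norm_integral_le_integral_norm _
    rw [dirac, coe_mk, integral_dirac' _ _ f.continuous.stronglyMeasurable]
    simpa using (squeeze_zero_norm hle (h f)).add_const (f x)

theorem tendsto_dirac_of_le_smul {μ ν : ι → ProbabilityMeasure X} {c : ℝ≥0∞}
    (hle : ∀ i, (ν i : Measure X) ≤ c • (μ i : Measure X)) (hc : c ≠ ∞)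
    (hμ : Tendsto μ l (𝓝 (dirac x))) : Tendsto ν l (𝓝 (dirac x)) := by
  rw [tendsto_dirac_iff] at hμ ⊢
  intro f
  set g : X →ᵇ ℝ := |f - BoundedContinuousFunction.const X (f x)|
  have hint (i : ι) : ∫ y, g y ∂(ν i : Measure X) ≤ c.toReal * ∫ y, g y ∂(μ i : Measure X) := by
    rw [← smul_eq_mul, ← integral_smul_measure]
    exact integral_mono_measure (hle i) (Eventually.of_forall fun y => abs_nonneg _)
      ((g.integrable _).smul_measure hc)
  refine squeeze_zero (fun i => integral_nonneg fun y => abs_nonneg _) hint ?_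
  simpa [g] using (hμ f).const_mul c.toReal

end ProbabilityMeasure
end MeasureTheory

open ProbabilityMeasure in
theorem prob_action_proximal_general {X : Type*} [TopologicalSpace X]
    [MeasurableSpace X] [BorelSpace X]
    {G : Type*} [Group G] [MulAction G X]
    (hcont : ∀ g : G, Continuous fun x : X => g • x)
    (hsp : ∀ μ : ProbabilityMeasure X, ∃ x : X,
      (⟨Measure.dirac x, inferInstance⟩ : ProbabilityMeasure X) ∈
        closure {ν : ProbabilityMeasure X |
          ∃ g : G, ν = μ.map (hcont g).measurable.aemeasurable}) :
    ∀ μ₁ μ₂ : ProbabilityMeasure X, ∃ x : X,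
      ((⟨Measure.dirac x, inferInstance⟩ : ProbabilityMeasure X),
        (⟨Measure.dirac x, inferInstance⟩ : ProbabilityMeasure X)) ∈
        closure {p : ProbabilityMeasure X × ProbabilityMeasure X |
          ∃ g : G, p = (μ₁.map (hcont g).measurable.aemeasurable,
            μ₂.map (hcont g).measurable.aemeasurable)} := by
  intro μ₁ μ₂
  let translate (ν : ProbabilityMeasure X) (g : G) := ν.map (hcont g).measurable.aemeasurable
  let μ := average μ₁ μ₂
  obtain ⟨x, hclosure⟩ := hsp μ
  have hx : dirac x ∈ closure (Set.range (translate μ)) := by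
    rw [show Set.range (translate μ) = {ν | ∃ g, ν = translate μ g} from
      Set.ext fun _ => exists_congr fun _ => eq_comm]
    exact hclosure
  have := Filter.comap_nhds_neBot_of_mem_closure_range hx
  have hdom {ν : ProbabilityMeasure X} (hν : (ν : Measure X) ≤ (2 : ℝ≥0∞) • (μ : Measure X)) :
      Tendsto (translate ν) (comap (translate μ) (𝓝 (dirac x))) (𝓝 (dirac x)) :=
    tendsto_dirac_of_le_smul
      (fun g => by
        simpa only [translate, toMeasure_map] using
          Measure.map_le_smul_map_of_le_smul hν (hcont g).measurable)
      ENNReal.ofNat_ne_top tendsto_comap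
  refine ⟨x, ?_⟩
  change (dirac x, dirac x) ∈ _
  exact mem_closure_of_tendsto
    ((hdom (le_two_smul_average_left μ₁ μ₂)).prodMk_nhds
      (hdom (le_two_smul_average_right μ₁ μ₂)))
    (Eventually.of_forall fun g => ⟨g, rfl⟩)

/-- If for every probability measure on a compact Hausdorff `G`-space some Dirac measure lies
in the closure of its orbit, then for every pair `μ₁, μ₂` of probability measures there is a
point `x` with `(δ_x, δ_x)` in the closure of `{(g·μ₁, g·μ₂) : g ∈ G}`; in particular the
induced action of `G` on `Prob(X)` is proximal. -/
theorem prob_action_proximal {X : Type*} [TopologicalSpace X] [CompactSpace X] [T2Space X]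
    [MeasurableSpace X] [BorelSpace X]
    {G : Type*} [Group G] [MulAction G X]
    (hcont : ∀ g : G, Continuous fun x : X => g • x)
    (hsp : ∀ μ : ProbabilityMeasure X, ∃ x : X,
      (⟨Measure.dirac x, inferInstance⟩ : ProbabilityMeasure X) ∈
        closure {ν : ProbabilityMeasure X |
          ∃ g : G, ν = μ.map (hcont g).measurable.aemeasurable}) :
    ∀ μ₁ μ₂ : ProbabilityMeasure X, ∃ x : X,
      ((⟨Measure.dirac x, inferInstance⟩ : ProbabilityMeasure X),
        (⟨Measure.dirac x, inferInstance⟩ : ProbabilityMeasure X)) ∈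
        closure {p : ProbabilityMeasure X × ProbabilityMeasure X |
          ∃ g : G, p = (μ₁.map (hcont g).measurable.aemeasurable,
            μ₂.map (hcont g).measurable.aemeasurable)} :=
  prob_action_proximal_general hcont hsp
end

section
/- Let G be a topological group, let L ≤ G be a closed subgroup that is a maximal closed subgroup (i.e., every closed subgroup M with L ≤ M equals L or G), and let Γ ≤ G be a dense subgroup. Equip the coset space G/L with the quotient topology and the natural left G-action. Let R be an equivalence relation on G/L that is Γ-invariant (x R y implies (γx) R (γy) for all γ ∈ Γ) and whose graph {(x,y) : x R y} is closed in (G/L) × (G/L). Then R is either the equality relation or the full relation identifying all points. (In particular the Γ-flow on G/L is prime.) -/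
/-!
A closed relation that is invariant under a dense subgroup `Γ` is invariant under all of `G`.
Then the elements `g` with `g • x₀ R x₀`, for `x₀ = L` the base coset, form a subgroup; it is
closed because the graph of `R` is, and it contains the stabilizer `L` of `x₀`. By maximality it
is `L`, which forces `R` to be equality, or `G`, which forces `R` to be the full relation.
-/

theorem Dense.smul_rel_smul_of_isClosed {G X : Type*} [TopologicalSpace G] [TopologicalSpace X]
    [SMul G X] [ContinuousSMul G X] {S : Set G} (hS : Dense S) {R : X → X → Prop}
    (hclosed : IsClosed {p : X × X | R p.1 p.2})
    (hinv : ∀ γ ∈ S, ∀ x y : X, R x y → R (γ • x) (γ • y))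
    (g : G) {x y : X} (hxy : R x y) : R (g • x) (g • y) :=
  hS.induction (fun γ hγ => hinv γ hγ x y hxy)
    (hclosed.preimage ((continuous_id.smul continuous_const).prodMk
      (continuous_id.smul continuous_const))) g

namespace Equivalence

variable {G X : Type*} [Group G] [MulAction G X] {R : X → X → Prop}

/-- The stabilizer of the class of `x` in the quotient of `X` by the `G`-invariant relation `R`. -/
def classStabilizer (hR : Equivalence R) (hinv : ∀ g : G, ∀ x y : X, R x y → R (g • x) (g • y))
    (x : X) : Subgroup G where
  carrier := {g | R (g • x) x}
  one_mem' := by simpa using hR.refl x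
  mul_mem' {a b} ha hb := hR.trans (by simpa [mul_smul] using hinv a _ _ hb) ha
  inv_mem' {a} ha := by simpa [smul_smul] using hinv a⁻¹ _ _ (hR.symm ha)

variable (hR : Equivalence R) (hinv : ∀ g : G, ∀ x y : X, R x y → R (g • x) (g • y))

@[simp]
theorem mem_classStabilizer {x : X} {g : G} : g ∈ hR.classStabilizer hinv x ↔ R (g • x) x :=
  Iff.rfl

theorem smul_rel_smul_iff {x : X} {g h : G} :
    R (g • x) (h • x) ↔ h⁻¹ * g ∈ hR.classStabilizer hinv x := by
  constructor
  · intro hgh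
    simpa [mul_smul] using hinv h⁻¹ _ _ hgh
  · intro hmem
    simpa [mul_smul] using hinv h _ _ hmem

theorem stabilizer_le_classStabilizer (x : X) :
    MulAction.stabilizer G x ≤ hR.classStabilizer hinv x := fun g hg => by
  simpa [MulAction.mem_stabilizer_iff.mp hg] using hR.refl x

theorem eq_of_classStabilizer_le [MulAction.IsPretransitive G X] {x : X}
    (hle : hR.classStabilizer hinv x ≤ MulAction.stabilizer G x) {y z : X} (hyz : R y z) :
    y = z := by
  obtain ⟨g, rfl⟩ := MulAction.exists_smul_eq G x y
  obtain ⟨h, rfl⟩ := MulAction.exists_smul_eq G x z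
  have hstab := hle ((hR.smul_rel_smul_iff hinv).mp hyz)
  rw [MulAction.mem_stabilizer_iff, mul_smul, inv_smul_eq_iff] at hstab
  exact hstab

theorem rel_of_classStabilizer_eq_top [MulAction.IsPretransitive G X] {x : X}
    (htop : hR.classStabilizer hinv x = ⊤) (y z : X) : R y z := by
  obtain ⟨g, rfl⟩ := MulAction.exists_smul_eq G x y
  obtain ⟨h, rfl⟩ := MulAction.exists_smul_eq G x z
  rw [hR.smul_rel_smul_iff hinv, htop]
  exact Subgroup.mem_top _

theorem isClosed_classStabilizer [TopologicalSpace G] [TopologicalSpace X] [ContinuousSMul G X]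
    (hclosed : IsClosed {p : X × X | R p.1 p.2}) (x : X) :
    IsClosed (hR.classStabilizer hinv x : Set G) :=
  hclosed.preimage ((continuous_id.smul continuous_const).prodMk continuous_const)

end Equivalence

theorem prime_homogeneous_flow_general {G : Type*} [Group G] [TopologicalSpace G]
    [IsTopologicalGroup G]
    (L : Subgroup G)
    (hLmax : ∀ M : Subgroup G, IsClosed (M : Set G) → L ≤ M → M = L ∨ M = ⊤)
    (Γ : Subgroup G) (hΓ : Dense (Γ : Set G))
    (R : G ⧸ L → G ⧸ L → Prop) (hR : Equivalence R)
    (hinv : ∀ γ ∈ Γ, ∀ x y : G ⧸ L, R x y → R (γ • x) (γ • y))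
    (hclosed : IsClosed {p : (G ⧸ L) × (G ⧸ L) | R p.1 p.2}) :
    (∀ x y : G ⧸ L, R x y ↔ x = y) ∨ (∀ x y : G ⧸ L, R x y) := by
  have hGinv : ∀ g : G, ∀ x y : G ⧸ L, R x y → R (g • x) (g • y) := fun g _ _ =>
    hΓ.smul_rel_smul_of_isClosed hclosed hinv g
  have hLM : L ≤ hR.classStabilizer hGinv ((1 : G) : G ⧸ L) := by
    simpa using hR.stabilizer_le_classStabilizer hGinv ((1 : G) : G ⧸ L)
  rcases hLmax _ (hR.isClosed_classStabilizer hGinv hclosed _) hLM with hL | htop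
  · have hle : hR.classStabilizer hGinv ((1 : G) : G ⧸ L) ≤
        MulAction.stabilizer G ((1 : G) : G ⧸ L) := by
      simp [hL]
    exact Or.inl fun x y => ⟨hR.eq_of_classStabilizer_le hGinv hle, fun hxy => hxy ▸ hR.refl x⟩
  · exact Or.inr (hR.rel_of_classStabilizer_eq_top hGinv htop)

/-- Let `L` be a maximal closed subgroup of a topological group `G` and `Γ ≤ G` a dense
subgroup. Every `Γ`-invariant closed equivalence relation on the coset space `G/L` is either
equality or the full relation: the `Γ`-flow `G/L` is prime. -/
theorem prime_homogeneous_flow {G : Type*} [Group G] [TopologicalSpace G]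
    [IsTopologicalGroup G]
    (L : Subgroup G) (hLc : IsClosed (L : Set G))
    (hLmax : ∀ M : Subgroup G, IsClosed (M : Set G) → L ≤ M → M = L ∨ M = ⊤)
    (Γ : Subgroup G) (hΓ : Dense (Γ : Set G))
    (R : G ⧸ L → G ⧸ L → Prop) (hR : Equivalence R)
    (hinv : ∀ γ ∈ Γ, ∀ x y : G ⧸ L, R x y → R (γ • x) (γ • y))
    (hclosed : IsClosed {p : (G ⧸ L) × (G ⧸ L) | R p.1 p.2}) :
    (∀ x y : G ⧸ L, R x y ↔ x = y) ∨ (∀ x y : G ⧸ L, R x y) :=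
  prime_homogeneous_flow_general L hLmax Γ hΓ R hR hinv hclosed
end
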